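/- Let n ≥ 1, let 0 ≤ p ≤ n, and let α₁, …, αₙ be real numbers with αᵢ ≤ 1 for all i. If at least p+1 of the αᵢ are negative, then 0 ≤ Σ_{j=0}^{p} (−1)^{p−j} · e_j(1−α₁, …, 1−αₙ), where e_j denotes the j-th elementary symmetric polynomial in n variables. -/
import Mathlib

open Multiset Finset

lemma my_esymm_nonneg (s : Multiset ℝ) (hs : ∀ x ∈ s, 0 ≤ x) (k : ℕ) : 0 ≤ s.esymm k := by
  apply Multiset.sum_nonneg
  intro x hx
  simp only [Multiset.mem_map] at hx
  obtain ⟨t, ht, rfl⟩ := hx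
  exact Multiset.prod_nonneg fun y hy =>
    hs y (Multiset.mem_of_le (Multiset.mem_powersetCard.mp ht).1 hy)

lemma my_esymm_cons (a : ℝ) (t : Multiset ℝ) (j : ℕ) :
    (a ::ₘ t).esymm (j + 1) = t.esymm (j + 1) + a * t.esymm j := by
  unfold Multiset.esymm
  rw [Multiset.powersetCard_cons, Multiset.map_add, Multiset.sum_add, Multiset.map_map]
  congr 1
  rw [← Multiset.sum_map_mul_left]
  apply congrArg
  apply Multiset.map_congr rfl
  intro x _
  simp [Multiset.prod_cons]

lemma my_esymm_zero (s : Multiset ℝ) : s.esymm 0 = 1 := by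
  simp [Multiset.esymm]

lemma key_lemma : ∀ (p : ℕ) (s : Multiset ℝ), (∀ x ∈ s, 0 ≤ x) →
    p + 1 ≤ s.countP (fun x => 1 < x) →
    0 ≤ ∑ j ∈ Finset.range (p + 1), (-1 : ℝ) ^ (p - j) * s.esymm j := by
  intro p
  induction p with
  | zero =>
    intro s _ _
    simp [my_esymm_zero]
  | succ p IH =>
    intro s hs hcount
    have hpos : 0 < s.countP (fun x => 1 < x) := by omega
    rw [Multiset.countP_pos] at hpos
    obtain ⟨a, has, ha⟩ := hpos
    obtain ⟨t, rfl⟩ := Multiset.exists_cons_of_mem has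
    have ht : ∀ x ∈ t, 0 ≤ x := fun x hx => hs x (Multiset.mem_cons_of_mem hx)
    have hcount' : p + 1 ≤ t.countP (fun x => 1 < x) := by
      rw [Multiset.countP_cons_of_pos _ ha] at hcount
      exact Nat.succ_le_succ_iff.mp hcount
    have hT := IH t ht hcount'
    set T : ℝ := ∑ j ∈ Finset.range (p + 1), (-1 : ℝ) ^ (p - j) * t.esymm j with hTdef
    have key : ∑ j ∈ Finset.range (p + 2), (-1 : ℝ) ^ (p + 1 - j) * (a ::ₘ t).esymm j
        = t.esymm (p + 1) + (a - 1) * T := by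
      rw [Finset.sum_range_succ']
      have h1 : ∀ j ∈ Finset.range (p + 1),
          (-1 : ℝ) ^ (p + 1 - (j + 1)) * (a ::ₘ t).esymm (j + 1)
          = (-1 : ℝ) ^ (p - j) * t.esymm (j + 1) + a * ((-1 : ℝ) ^ (p - j) * t.esymm j) := by
        intro j _
        rw [my_esymm_cons, Nat.succ_sub_succ]
        ring
      rw [Finset.sum_congr rfl h1, Finset.sum_add_distrib, ← Finset.mul_sum, ← hTdef]
      have h2 : ∑ j ∈ Finset.range (p + 1), (-1 : ℝ) ^ (p - j) * t.esymm (j + 1)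
          = t.esymm (p + 1) - T - (-1 : ℝ) ^ (p + 1) := by
        have hU : ∑ k ∈ Finset.range (p + 2), (-1 : ℝ) ^ (p + 1 - k) * t.esymm k
            = t.esymm (p + 1) - T := by
          rw [Finset.sum_range_succ]
          have : ∀ k ∈ Finset.range (p + 1),
              (-1 : ℝ) ^ (p + 1 - k) * t.esymm k = -((-1 : ℝ) ^ (p - k) * t.esymm k) := by
            intro k hk
            rw [Finset.mem_range] at hk
            have : p + 1 - k = (p - k) + 1 := by omega
            rw [this]
            ring
          rw [Finset.sum_congr rfl this, Finset.sum_neg_distrib, ← hTdef]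
          simp
          ring
        have hU' : ∑ k ∈ Finset.range (p + 2), (-1 : ℝ) ^ (p + 1 - k) * t.esymm k
            = ∑ j ∈ Finset.range (p + 1), (-1 : ℝ) ^ (p + 1 - (j + 1)) * t.esymm (j + 1)
              + (-1 : ℝ) ^ (p + 1 - 0) * t.esymm 0 := Finset.sum_range_succ' _ _
        rw [hU] at hU'
        simp only [Nat.succ_sub_succ, Nat.sub_zero, my_esymm_zero, mul_one] at hU'
        linarith
      rw [h2]
      simp only [Nat.succ_sub_succ, Nat.sub_self, pow_zero, one_mul, my_esymm_zero, mul_one,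
        Nat.sub_zero]
      rw [pow_succ]
      ring
    rw [show p + 1 + 1 = p + 2 from rfl, key]
    have h3 : 0 ≤ t.esymm (p + 1) := my_esymm_nonneg t ht _
    nlinarith

/-- If `αᵢ ≤ 1` for all `i` and at least `p+1` of the `αᵢ` are negative, then
`0 ≤ Σ_{j=0}^{p} (−1)^{p−j} · e_j(1−α₁, …, 1−αₙ)`. -/
theorem stmt10 (n : ℕ) (hn : 1 ≤ n) (p : ℕ) (hp : p ≤ n)
    (α : Fin n → ℝ) (hα : ∀ i, α i ≤ 1)
    (hneg : p + 1 ≤ (Finset.univ.filter fun i : Fin n => α i < 0).card) :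
    (0 : ℝ) ≤
      ∑ j ∈ Finset.range (p + 1),
        (-1 : ℝ) ^ (p - j) * ((Finset.univ.val.map fun i : Fin n => 1 - α i)).esymm j := by
  apply key_lemma
  · intro x hx
    simp only [Multiset.mem_map] at hx
    obtain ⟨i, _, rfl⟩ := hx
    linarith [hα i]
  · rw [Multiset.countP_map]
    have heq : Multiset.filter (fun i => 1 < 1 - α i) Finset.univ.val
        = Multiset.filter (fun i => α i < 0) Finset.univ.val := by
      apply Multiset.filter_congr
      intro i _
      constructor <;> intro h <;> linarith
    rw [heq]
    exact hneg
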